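/- Let m ≥ 1 be odd and n ≥ 2 with gcd(m, n) = 1, and set δ := ⌊n/m⌋. Define A := ∑_{l=0}^{n−1} ∑_{k=1}^{2m−1} 2(ζ_{2m}^{2nk} − 1)/((1 − ζ_{2m}^{−k} ζ_{2n}^{−l})(1 − ζ_{2m}^{−k} ζ_{2n}^{l})) and B := ∑_{l=0}^{n−1} ∑_{k=0}^{2m−1} 2((−1)^n ζ_{2m}^{2nk} − 1)/(1 + ζ_{2m}^{−2k}). Then (m + n + 1)/m + (A + B)/(4mn) = δ + 2 + ((−1)^δ − 1)/2. -/
import Mathlib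
open Finset


/-- `ζ_N = exp(2πi/N)`. -/
noncomputable def zeta (N : ℕ) : ℂ := Complex.exp (2 * Real.pi * Complex.I / N)

lemma zeta_prim (N : ℕ) (hN : N ≠ 0) : IsPrimitiveRoot (zeta N) N := by
  unfold zeta; exact Complex.isPrimitiveRoot_exp _ hN

lemma zeta_ne_zero (N : ℕ) : zeta N ≠ 0 := by
  unfold zeta; exact Complex.exp_ne_zero _

lemma expandB {w : ℂ} {m : ℕ} (hm : Odd m) (hw : w^m = 1) :
    (1 + w) * ∑ j ∈ range m, (-w)^j = 2 := by
  have h := geom_sum_mul (-w) m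
  rw [Odd.neg_pow hm, hw] at h
  linear_combination -h

lemma filt' (r : ℂ) {M K : ℕ} (hMK : M ∣ K) (hr : r ^ M = 1) :
    ∑ k ∈ range K, r^k = if r = 1 then (K:ℂ) else 0 := by
  obtain ⟨c, rfl⟩ := hMK
  by_cases h1 : r = 1
  · simp [h1]
  · rw [if_neg h1, geom_sum_eq h1, pow_mul, hr, one_pow]
    simp

lemma modeq_helper {m j : ℕ} (n : ℕ) (hj : j < m) :
    ((m:ℤ) ∣ (n:ℤ) - j) ↔ j = n % m := by
  have hm : 0 < m := by omega
  have h0 : (m:ℤ) ∣ (n:ℤ) - (n % m : ℕ) := by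
    refine ⟨(n/m : ℕ), ?_⟩
    have h := Nat.mod_add_div n m
    have h' : ((n % m : ℕ):ℤ) + (m:ℤ) * ((n/m : ℕ):ℤ) = (n:ℤ) := by exact_mod_cast h
    linarith
  constructor
  · intro h
    have h2 : (m:ℤ) ∣ ((n % m : ℕ):ℤ) - (j:ℤ) := by
      have h3 := dvd_sub h0 h
      rwa [show ((n:ℤ) - (n % m : ℕ)) - ((n:ℤ) - j) = (j:ℤ) - ((n % m:ℕ):ℤ) by ring,
        ← dvd_neg, neg_sub] at h3
    have h5 : n % m < m := Nat.mod_lt _ hm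
    have h4 : ((n % m : ℕ):ℤ) - (j:ℤ) = 0 := by
      refine Int.eq_zero_of_abs_lt_dvd h2 ?_
      rw [abs_lt]
      constructor
      · have h6 : (0:ℤ) ≤ ((n % m : ℕ):ℤ) := Int.natCast_nonneg _
        have h7 : (j:ℤ) < m := by exact_mod_cast hj
        omega
      · have h6 : ((n % m : ℕ):ℤ) < m := by exact_mod_cast h5
        have h7 : (0:ℤ) ≤ (j:ℤ) := Int.natCast_nonneg _
        omega
    omega
  · intro h
    rw [h]; exact h0

lemma sum_jw (w : ℂ) (M : ℕ) :
    (w-1) * ∑ j ∈ range M, (j:ℂ)*w^j = ((M:ℂ)-1)*w^M - (∑ j ∈ range M, w^j) + 1 := by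
  induction M with
  | zero => simp
  | succ M ih =>
    rw [sum_range_succ, sum_range_succ, pow_succ]
    push_cast
    linear_combination ih

lemma geom_zero {w : ℂ} {M : ℕ} (hw : w^M = 1) (h1 : w ≠ 1) : ∑ j ∈ range M, w^j = 0 := by
  have h := geom_sum_mul w M
  rw [hw, sub_self] at h
  rcases mul_eq_zero.1 h with h' | h'
  · exact h'
  · exact absurd (by linear_combination h' : w = 1) h1

lemma pair_id (c a b : ℂ) (h1 : 1-a ≠ 0) (h2 : 1+a ≠ 0) (h3 : 1-b ≠ 0) (h4 : 1+b ≠ 0) :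
    c/((1-a)*(1-b)) + c/((1+a)*(1+b)) = c*(2*(1+a*b))/((1-a*a)*(1-b*b)) := by
  rw [show (1-a*a) = (1-a)*(1+a) by ring, show (1-b*b) = (1-b)*(1+b) by ring]
  field_simp
  ring

lemma Asum (m n : ℕ) (hm : Odd m) (hm1 : 1 ≤ m) (hn1 : 1 ≤ n) (hgcd : Nat.gcd m n = 1) :
    ∑ l ∈ Finset.range n, ∑ k ∈ Finset.Icc 1 (2 * m - 1),
        2 * (zeta (2 * m) ^ (2 * n * k) - 1) /
          ((1 - (zeta (2 * m))⁻¹ ^ k * (zeta (2 * n))⁻¹ ^ l) *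
            (1 - (zeta (2 * m))⁻¹ ^ k * zeta (2 * n) ^ l))
      = 4 * (n:ℂ) * ((m:ℂ) - 1 - ((n % m : ℕ):ℂ)) := by
  have h2m : (2*m) ≠ 0 := by omega
  have h2n : (2*n) ≠ 0 := by omega
  have hm0 : (m:ℂ) ≠ 0 := Nat.cast_ne_zero.2 (by omega)
  have hz : IsPrimitiveRoot (zeta (2*m)) (2*m) := zeta_prim _ h2m
  have hz0 : zeta (2*m) ≠ 0 := zeta_ne_zero _
  have hx : IsPrimitiveRoot (zeta (2*n)) (2*n) := zeta_prim _ h2n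
  have hx0 : zeta (2*n) ≠ 0 := zeta_ne_zero _
  set z := zeta (2*m) with hzd
  set ξ := zeta (2*n) with hxd
  have hzk : ∀ (a : ℤ) (k : ℕ), (z^a)^k = z^(a*(k:ℤ)) := fun a k => by
    rw [← zpow_natCast (z^a), ← zpow_mul]
  have hxk : ∀ (a : ℤ) (k : ℕ), (ξ^a)^k = ξ^(a*(k:ℤ)) := fun a k => by
    rw [← zpow_natCast (ξ^a), ← zpow_mul]
  have hinvz : ∀ k : ℕ, z⁻¹^k = z^(-(k:ℤ)) := fun k => by
    rw [inv_pow, ← zpow_natCast, ← zpow_neg]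
  have hinvx : ∀ k : ℕ, ξ⁻¹^k = ξ^(-(k:ℤ)) := fun k => by
    rw [inv_pow, ← zpow_natCast, ← zpow_neg]
  have hcop : ∀ k : ℕ, 1 ≤ k → k < m → ¬ (m ∣ k * n) := by
    intro k h1 h2 hdvd
    have hk := Nat.Coprime.dvd_of_dvd_mul_right (hgcd : Nat.Coprime m n) hdvd
    have := Nat.le_of_dvd (by omega) hk
    omega
  have hcop2 : ∀ k : ℕ, 1 ≤ k → k < m → ¬ (m ∣ 2 * k) := by
    intro k h1 h2 hdvd
    have hk := Nat.Coprime.dvd_of_dvd_mul_left (Nat.coprime_two_right.2 hm) hdvd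
    have := Nat.le_of_dvd (by omega) hk
    omega
  have key : ∀ k : ℕ, 1 ≤ k → k < m → ∀ t : ℤ, z^(-(2:ℤ)*k) * ξ^(2*t) ≠ 1 := by
    intro k h1 h2 t heq
    have hxt : (ξ^((2:ℤ)*t))^n = 1 := by
      rw [hxk]
      rw [show ((2:ℤ)*t)*(n:ℤ) = ((2*n : ℕ):ℤ)*t by push_cast; ring, zpow_mul, zpow_natCast,
        hx.pow_eq_one, one_zpow]
    have hzn : (z^(-(2:ℤ)*(k:ℤ)))^n = 1 := by
      have hh := congrArg (·^n) heq
      simp only [mul_pow, one_pow] at hh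
      rw [hxt, mul_one] at hh
      exact hh
    rw [hzk, hz.zpow_eq_one_iff_dvd] at hzn
    rw [show (-(2:ℤ)*k)*(n:ℤ) = -(2*((k:ℤ)*n)) by ring, dvd_neg] at hzn
    push_cast at hzn
    have h4 : (m:ℤ) ∣ (k:ℤ)*n := (mul_dvd_mul_iff_left (by norm_num : (2:ℤ) ≠ 0)).1 hzn
    exact hcop k h1 h2 (by exact_mod_cast h4)
  have sqne : ∀ u : ℂ, u*u ≠ 1 → (1 - u ≠ 0 ∧ 1 + u ≠ 0) := by
    intro u h
    constructor
    · intro h'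
      have hu : u = 1 := by linear_combination -h'
      exact h (by rw [hu, one_mul])
    · intro h'
      have hu : u = -1 := by linear_combination h'
      exact h (by rw [hu]; ring)
  have hzm : z^m = -1 := by
    have hsq : (z^m)*(z^m) = 1 := by rw [← pow_add, show m+m = 2*m by ring, hz.pow_eq_one]
    have hne1 : z^m ≠ 1 := hz.pow_ne_one_of_pos_of_lt (by omega) (by omega)
    have hfac : (z^m - 1)*(z^m + 1) = 0 := by linear_combination hsq
    rcases mul_eq_zero.1 hfac with h' | h'
    · exact absurd (by linear_combination h' : z^m = 1) hne1
    · linear_combination h'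
  have hzim : z⁻¹^m = -1 := by
    rw [inv_pow, hzm]
    norm_num
  -- Stage 1 : pairing k ↔ m + k
  have stage1 : ∀ l ∈ Finset.range n,
      (∑ k ∈ Finset.Icc 1 (2 * m - 1),
        2 * (z ^ (2 * n * k) - 1) /
          ((1 - z⁻¹ ^ k * ξ⁻¹ ^ l) * (1 - z⁻¹ ^ k * ξ ^ l)))
      = ∑ k ∈ Finset.range m,
          2 * (z ^ (2 * n * k) - 1) * (2 * (1 + z⁻¹^(2*k))) /
            ((1 - z⁻¹^(2*k) * ξ⁻¹^(2*l)) * (1 - z⁻¹^(2*k) * ξ^(2*l))) := by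
    intro l _
    have hIcc : Finset.Icc 1 (2*m - 1) = (Finset.range (2*m)).erase 0 := by
      ext x; simp only [Finset.mem_Icc, Finset.mem_erase, Finset.mem_range]; omega
    rw [hIcc, Finset.sum_erase_eq_sub (Finset.mem_range.2 (by omega : 0 < 2*m))]
    rw [show (2 * (z ^ (2*n*0) - 1) / ((1 - z⁻¹^0 * ξ⁻¹^l) * (1 - z⁻¹^0 * ξ^l))) = 0 by
      norm_num]
    rw [sub_zero, show (2 : ℕ)*m = m + m by ring, Finset.sum_range_add, ← Finset.sum_add_distrib]
    refine Finset.sum_congr rfl (fun k hk => ?_)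
    rw [Finset.mem_range] at hk
    have hnum : z ^ (2*n*(m+k)) = z ^ (2*n*k) := by
      rw [show 2*n*(m+k) = 2*m*n + 2*n*k by ring, pow_add, pow_mul, hz.pow_eq_one, one_pow,
        one_mul]
    have hneg : z⁻¹^(m+k) = -(z⁻¹^k) := by rw [pow_add, hzim, neg_one_mul]
    rw [hnum, hneg]
    rcases Nat.eq_zero_or_pos k with rfl | hk1
    · norm_num
    · have hyy : ξ⁻¹^l * ξ^l = 1 := by rw [← mul_pow, inv_mul_cancel₀ hx0, one_pow]
      have hz2k : z⁻¹^(2*k) = z^(-(2:ℤ)*(k:ℤ)) := by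
        rw [hinvz]; congr 1 <;> push_cast <;> (try ring)
      have key2 : ∀ t : ℤ, z⁻¹^(2*k) * ξ^(2*t) ≠ 1 := by
        intro t
        rw [hz2k]; exact key k hk1 hk t
      have ha2 : (z⁻¹^k * ξ⁻¹^l) * (z⁻¹^k * ξ⁻¹^l) = z⁻¹^(2*k) * ξ⁻¹^(2*l) := by
        rw [show (z⁻¹^k * ξ⁻¹^l) * (z⁻¹^k * ξ⁻¹^l) = (z⁻¹^k*z⁻¹^k) * (ξ⁻¹^l*ξ⁻¹^l) by ring,
          ← pow_add, ← pow_add, show k+k = 2*k by ring, show l+l = 2*l by ring]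
      have hb2 : (z⁻¹^k * ξ^l) * (z⁻¹^k * ξ^l) = z⁻¹^(2*k) * ξ^(2*l) := by
        rw [show (z⁻¹^k * ξ^l) * (z⁻¹^k * ξ^l) = (z⁻¹^k*z⁻¹^k) * (ξ^l*ξ^l) by ring,
          ← pow_add, ← pow_add, show k+k = 2*k by ring, show l+l = 2*l by ring]
      have hane : (z⁻¹^k * ξ⁻¹^l) * (z⁻¹^k * ξ⁻¹^l) ≠ 1 := by
        rw [ha2, show ξ⁻¹^(2*l) = ξ^(2*(-(l:ℤ))) by rw [hinvx]; congr 1 <;> push_cast <;> (try ring)]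
        exact key2 _
      have hbne : (z⁻¹^k * ξ^l) * (z⁻¹^k * ξ^l) ≠ 1 := by
        rw [hb2, show ξ^(2*l) = ξ^(2*((l:ℤ))) by rw [← zpow_natCast ξ (2*l)]; congr 1 <;> push_cast <;> (try ring)]
        exact key2 _
      obtain ⟨h1a, h2a⟩ := sqne _ hane
      obtain ⟨h1b, h2b⟩ := sqne _ hbne
      rw [show (1 : ℂ) - -z⁻¹^k * ξ⁻¹^l = 1 + z⁻¹^k * ξ⁻¹^l by ring,
        show (1 : ℂ) - -z⁻¹^k * ξ^l = 1 + z⁻¹^k * ξ^l by ring,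
        pair_id _ _ _ h1a h2a h1b h2b]
      have hab : (z⁻¹^k * ξ⁻¹^l) * (z⁻¹^k * ξ^l) = z⁻¹^(2*k) := by
        rw [show (z⁻¹^k * ξ⁻¹^l) * (z⁻¹^k * ξ^l) = (z⁻¹^k*z⁻¹^k) * (ξ⁻¹^l*ξ^l) by ring, hyy,
          mul_one, ← pow_add, show k+k = 2*k by ring]
      rw [hab, ha2, hb2]
  rw [Finset.sum_congr rfl stage1, Finset.sum_comm]
  have h0m : (0:ℕ) ∈ Finset.range m := Finset.mem_range.2 (by omega)
  rw [← Finset.sum_erase_add _ _ h0m]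
  rw [show (∑ l ∈ Finset.range n,
      2 * (z ^ (2 * n * 0) - 1) * (2 * (1 + z⁻¹^(2*0))) /
        ((1 - z⁻¹^(2*0) * ξ⁻¹^(2*l)) * (1 - z⁻¹^(2*0) * ξ^(2*l)))) = 0 from
    Finset.sum_eq_zero (fun l _ => by norm_num), add_zero]
  -- Stage 2 : per k, sum over l
  have stage2 : ∀ k ∈ (Finset.range m).erase 0,
      (∑ l ∈ Finset.range n,
        2 * (z ^ (2 * n * k) - 1) * (2 * (1 + z⁻¹^(2*k))) /
          ((1 - z⁻¹^(2*k) * ξ⁻¹^(2*l)) * (1 - z⁻¹^(2*k) * ξ^(2*l))))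
      = -(4*(n:ℂ)/(m:ℂ)) * ∑ j ∈ Finset.range m,
          (j:ℂ) * ((z ^ ((2*(n:ℤ)) - 2*(j:ℤ)))^k + (z ^ (-(2:ℤ)*(j:ℤ)))^k) := by
    intro k hk
    obtain ⟨hk0, hkm⟩ := Finset.mem_erase.1 hk
    rw [Finset.mem_range] at hkm
    have hk1 : 1 ≤ k := by omega
    set x := z⁻¹^(2*k) with hxdef
    have hxm : x^m = 1 := by
      rw [hxdef, ← pow_mul, show 2*k*m = (2*m)*k by ring, pow_mul, inv_pow, hz.pow_eq_one,
        inv_one, one_pow]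
    have hxx : x*x ≠ 1 := by
      rw [hxdef, ← pow_add, show 2*k+2*k = 4*k by ring]
      intro h
      have hdvd := (hz.inv.pow_eq_one_iff_dvd (4*k)).1 h
      obtain ⟨c, hc⟩ := hdvd
      rw [mul_assoc] at hc
      exact hcop2 k hk1 hkm ⟨c, by omega⟩
    have hx1 : x ≠ 1 := fun h => hxx (by rw [h, one_mul])
    have hxnne : x^n ≠ 1 := by
      rw [hxdef, ← pow_mul]
      intro h
      have hdvd := (hz.inv.pow_eq_one_iff_dvd (2*k*n)).1 h
      obtain ⟨c, hc⟩ := hdvd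
      rw [mul_assoc, mul_assoc] at hc
      exact hcop k hk1 hkm ⟨c, by omega⟩
    have hxn0 : (1 - x^n) ≠ 0 := fun h => hxnne (by linear_combination -h)
    have hpow2 : ((1:ℂ) - x^n)^2 ≠ 0 := pow_ne_zero _ hxn0
    have hwx : z^(2*n*k) * x^n = 1 := by
      rw [hxdef, ← pow_mul, inv_pow, show 2*k*n = 2*n*k by ring,
        mul_inv_cancel₀ (pow_ne_zero _ hz0)]
    have hz2k : x = z^(-(2:ℤ)*(k:ℤ)) := by
      rw [hxdef, hinvz]; congr 1 <;> push_cast <;> (try ring)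
    have hyn : ∀ l : ℕ, (ξ⁻¹^(2*l))^n = 1 := fun l => by
      rw [← pow_mul, show 2*l*n = (2*n)*l by ring, pow_mul, inv_pow, hx.pow_eq_one, inv_one,
        one_pow]
    have hy'n : ∀ l : ℕ, (ξ^(2*l))^n = 1 := fun l => by
      rw [← pow_mul, show 2*l*n = (2*n)*l by ring, pow_mul, hx.pow_eq_one, one_pow]
    have hne1 : ∀ l : ℕ, (1 - x*ξ⁻¹^(2*l)) ≠ 0 := by
      intro l h
      refine key k hk1 hkm (-(l:ℤ)) ?_
      rw [← hz2k, show ξ^(2*(-(l:ℤ))) = ξ⁻¹^(2*l) by rw [hinvx]; congr 1 <;> push_cast <;> (try ring)]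
      linear_combination -h
    have hne2 : ∀ l : ℕ, (1 - x*ξ^(2*l)) ≠ 0 := by
      intro l h
      refine key k hk1 hkm ((l:ℤ)) ?_
      rw [← hz2k, show ξ^(2*((l:ℤ))) = ξ^(2*l) by rw [← zpow_natCast ξ (2*l)]; congr 1 <;> push_cast <;> (try ring)]
      linear_combination -h
    have hd1 : ∀ l : ℕ, (1 - x*ξ⁻¹^(2*l)) * (∑ i ∈ range n, (x*ξ⁻¹^(2*l))^i) = 1 - x^n := by
      intro l
      have hg := geom_sum_mul (x*ξ⁻¹^(2*l)) n
      rw [mul_pow, hyn l, mul_one] at hg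
      linear_combination -hg
    have hd2 : ∀ l : ℕ, (1 - x*ξ^(2*l)) * (∑ i ∈ range n, (x*ξ^(2*l))^i) = 1 - x^n := by
      intro l
      have hg := geom_sum_mul (x*ξ^(2*l)) n
      rw [mul_pow, hy'n l, mul_one] at hg
      linear_combination -hg
    have perl : ∀ l ∈ Finset.range n,
        2 * (z ^ (2 * n * k) - 1) * (2 * (1 + x)) /
          ((1 - x * ξ⁻¹^(2*l)) * (1 - x * ξ^(2*l)))
        = 2 * (z ^ (2 * n * k) - 1) * (2 * (1 + x)) *
            ((∑ i ∈ range n, (x*ξ⁻¹^(2*l))^i) * (∑ i ∈ range n, (x*ξ^(2*l))^i)) /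
            (1 - x^n)^2 := by
      intro l _
      rw [div_eq_div_iff (mul_ne_zero (hne1 l) (hne2 l)) hpow2]
      linear_combination
        (-(2 * (z ^ (2 * n * k) - 1) * (2 * (1 + x)) * (∑ i ∈ range n, (x*ξ^(2*l))^i) *
          (1 - x*ξ^(2*l)))) * hd1 l +
        (-(2 * (z ^ (2 * n * k) - 1) * (2 * (1 + x)) * (1 - x^n))) * hd2 l
    rw [Finset.sum_congr rfl perl, ← Finset.sum_div, ← Finset.mul_sum]
    -- evaluate ∑_l S1*S2
    have expand : ∀ l ∈ Finset.range n,
        (∑ i ∈ range n, (x*ξ⁻¹^(2*l))^i) * (∑ i ∈ range n, (x*ξ^(2*l))^i)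
        = ∑ i ∈ range n, ∑ j ∈ range n, x^(i+j) * (ξ^(2*((j:ℤ)-(i:ℤ))))^l := by
      intro l _
      rw [Finset.sum_mul_sum]
      refine Finset.sum_congr rfl fun i _ => Finset.sum_congr rfl fun j _ => ?_
      rw [mul_pow, mul_pow]
      have hxi : (ξ⁻¹^(2*l))^i * (ξ^(2*l))^j = (ξ^(2*((j:ℤ)-(i:ℤ))))^l := by
        rw [← pow_mul, ← pow_mul, inv_pow, ← zpow_natCast ξ (2*l*i), ← zpow_neg,
          ← zpow_natCast ξ (2*l*j), ← zpow_add₀ hx0, hxk]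
        congr 1 <;> push_cast <;> (try ring)
      calc x^i * (ξ⁻¹^(2*l))^i * (x^j * (ξ^(2*l))^j)
          = (x^i*x^j) * ((ξ⁻¹^(2*l))^i * (ξ^(2*l))^j) := by ring
        _ = x^(i+j) * (ξ^(2*((j:ℤ)-(i:ℤ))))^l := by rw [pow_add, hxi]
    rw [Finset.sum_congr rfl expand, Finset.sum_comm]
    have inner : ∀ i ∈ Finset.range n,
        (∑ l ∈ Finset.range n, ∑ j ∈ range n, x^(i+j) * (ξ^(2*((j:ℤ)-(i:ℤ))))^l)
        = (n:ℂ) * (x*x)^i := by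
      intro i hi
      rw [Finset.mem_range] at hi
      rw [Finset.sum_comm]
      have hj : ∀ j ∈ Finset.range n,
          (∑ l ∈ Finset.range n, x^(i+j) * (ξ^(2*((j:ℤ)-(i:ℤ))))^l)
          = x^(i+j) * (if j = i then (n:ℂ) else 0) := by
        intro j hjr
        rw [Finset.mem_range] at hjr
        rw [← Finset.mul_sum]
        congr 1
        rw [filt' _ (dvd_refl n) (by
          rw [hxk]
          exact (hx.zpow_eq_one_iff_dvd _).2 ⟨(j:ℤ)-(i:ℤ), by push_cast; ring⟩)]
        congr 1
        rw [hx.zpow_eq_one_iff_dvd, eq_iff_iff]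
        constructor
        · intro hdvd
          push_cast at hdvd
          rw [show (2:ℤ)*((j:ℤ)-(i:ℤ)) = 2*((j:ℤ)-i) by ring] at hdvd
          have h4 := (mul_dvd_mul_iff_left (by norm_num : (2:ℤ) ≠ 0)).1 hdvd
          have h5 := (modeq_helper (m := n) (j := i) j hi).1 h4
          rw [Nat.mod_eq_of_lt hjr] at h5
          omega
        · intro hji
          exact ⟨(j:ℤ)-(i:ℤ), by push_cast; rw [hji]; ring⟩
      rw [Finset.sum_congr rfl hj]
      rw [Finset.sum_congr rfl (fun j (_ : j ∈ Finset.range n) =>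
        (by split <;> simp : x^(i+j) * (if j = i then (n:ℂ) else 0)
          = if j = i then x^(i+j) * (n:ℂ) else 0)),
        Finset.sum_ite_eq' _ _ (fun j => x^(i+j) * (n:ℂ)), if_pos (Finset.mem_range.2 hi)]
      rw [show i+i = 2*i by ring, pow_mul, show x^2 = x*x by ring]
      ring
    rw [Finset.sum_congr rfl inner, ← Finset.mul_sum]
    -- final algebra
    have hT := geom_sum_mul (x*x) n
    rw [mul_pow] at hT
    have hJ : (x-1) * ∑ j ∈ range m, (j:ℂ)*x^j = (m:ℂ) := by
      rw [sum_jw, hxm, geom_zero hxm hx1]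
      ring
    have hHsum : ∑ j ∈ Finset.range m,
        (j:ℂ) * ((z ^ ((2*(n:ℤ)) - 2*(j:ℤ)))^k + (z ^ (-(2:ℤ)*(j:ℤ)))^k)
        = (z^(2*n*k) + 1) * ∑ j ∈ range m, (j:ℂ)*x^j := by
      rw [Finset.mul_sum]
      refine Finset.sum_congr rfl fun j _ => ?_
      have e2 : (z ^ (-(2:ℤ)*(j:ℤ)))^k = x^j := by
        rw [hzk, hxdef, ← pow_mul, inv_pow, ← zpow_natCast z (2*k*j), ← zpow_neg]
        congr 1 <;> push_cast <;> (try ring)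
      have e1 : (z ^ ((2*(n:ℤ)) - 2*(j:ℤ)))^k = z^(2*n*k) * x^j := by
        rw [hzk, show ((2*(n:ℤ)) - 2*(j:ℤ))*(k:ℤ) = ((2*n*k : ℕ):ℤ) + (-(2:ℤ)*(j:ℤ))*(k:ℤ) by
          push_cast; ring, zpow_add₀ hz0, zpow_natCast, ← hzk, e2]
      rw [e1, e2]
      ring
    rw [hHsum]
    rw [show -(4*(n:ℂ)/(m:ℂ)) * ((z^(2*n*k) + 1) * ∑ j ∈ range m, (j:ℂ)*x^j)
        = (-(4*(n:ℂ) * ((z^(2*n*k) + 1) * ∑ j ∈ range m, (j:ℂ)*x^j)))/(m:ℂ) by ring]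
    rw [div_eq_div_iff hpow2 hm0]
    linear_combination
      (-(4*(n:ℂ)*(z^(2*n*k)-1)*(1+x)*(∑ i ∈ range n, (x*x)^i))) * hJ +
      ((4*(n:ℂ)*(z^(2*n*k)-1)*(∑ j ∈ range m, (j:ℂ)*x^j))) * hT +
      (-(8*(n:ℂ)*(∑ j ∈ range m, (j:ℂ)*x^j)*(1-x^n))) * hwx
  rw [Finset.sum_congr rfl stage2, ← Finset.mul_sum, Finset.sum_comm]
  -- Stage 3 : sum over k
  have hs : n % m < m := Nat.mod_lt _ (by omega)
  have stage3 : ∀ j ∈ Finset.range m,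
      (∑ k ∈ (Finset.range m).erase 0,
        (j:ℂ) * ((z ^ ((2*(n:ℤ)) - 2*(j:ℤ)))^k + (z ^ (-(2:ℤ)*(j:ℤ)))^k))
      = (j:ℂ) * (((if j = n % m then ((m:ℕ):ℂ) else 0) - 1)
          + ((if j = 0 then ((m:ℕ):ℂ) else 0) - 1)) := by
    intro j hj
    rw [Finset.mem_range] at hj
    rw [← Finset.mul_sum, Finset.sum_add_distrib, Finset.sum_erase_eq_sub h0m,
      Finset.sum_erase_eq_sub h0m, pow_zero, pow_zero]
    have c1 : ∑ k ∈ Finset.range m, (z ^ ((2*(n:ℤ)) - 2*(j:ℤ)))^k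
        = if j = n % m then ((m:ℕ):ℂ) else 0 := by
      rw [filt' _ (dvd_refl m) (by
        rw [hzk]
        exact (hz.zpow_eq_one_iff_dvd _).2 ⟨(n:ℤ)-(j:ℤ), by push_cast; ring⟩)]
      congr 1
      rw [hz.zpow_eq_one_iff_dvd, eq_iff_iff]
      constructor
      · intro hdvd
        push_cast at hdvd
        rw [show (2:ℤ)*(n:ℤ) - 2*(j:ℤ) = 2*((n:ℤ)-j) by ring] at hdvd
        exact (modeq_helper n hj).1 ((mul_dvd_mul_iff_left (by norm_num : (2:ℤ) ≠ 0)).1 hdvd)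
      · intro hjs
        obtain ⟨c, hc⟩ := (modeq_helper n hj).2 hjs
        exact ⟨c, by push_cast; linear_combination 2*hc⟩
    have c2 : ∑ k ∈ Finset.range m, (z ^ (-(2:ℤ)*(j:ℤ)))^k
        = if j = 0 then ((m:ℕ):ℂ) else 0 := by
      rw [filt' _ (dvd_refl m) (by
        rw [hzk]
        exact (hz.zpow_eq_one_iff_dvd _).2 ⟨-(j:ℤ), by push_cast; ring⟩)]
      congr 1
      rw [hz.zpow_eq_one_iff_dvd, eq_iff_iff]
      constructor
      · intro hdvd
        push_cast at hdvd
        rw [show -(2:ℤ)*(j:ℤ) = 2*((0:ℤ)-j) by ring] at hdvd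
        have h3 := (mul_dvd_mul_iff_left (by norm_num : (2:ℤ) ≠ 0)).1 hdvd
        have h4 := (modeq_helper 0 hj).1 (by simpa using h3)
        rwa [Nat.zero_mod] at h4
      · intro hj0
        exact ⟨0, by rw [hj0]; push_cast; ring⟩
    rw [c1, c2]
  rw [Finset.sum_congr rfl stage3]
  have hgauss : ∑ j ∈ Finset.range m, (j:ℂ) = (m:ℂ)*((m:ℂ)-1)/2 := by
    have h := Finset.sum_range_id_mul_two m
    have h2 : ((∑ i ∈ Finset.range m, i : ℕ):ℂ) * 2 = (m:ℂ) * ((m:ℂ) - 1) := by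
      rw [← Nat.cast_ofNat, ← Nat.cast_mul, h, Nat.cast_mul, Nat.cast_sub hm1]
      norm_num
    push_cast at h2
    linear_combination h2/2
  have hexp2 : ∀ j ∈ Finset.range m,
      (j:ℂ) * (((if j = n % m then ((m:ℕ):ℂ) else 0) - 1)
          + ((if j = 0 then ((m:ℕ):ℂ) else 0) - 1))
      = (if j = n % m then (j:ℂ) * ((m:ℕ):ℂ) else 0)
        + (if j = 0 then (j:ℂ) * ((m:ℕ):ℂ) else 0) - 2*(j:ℂ) := by
    intro j _
    split <;> split <;> ring
  rw [Finset.sum_congr rfl hexp2, Finset.sum_sub_distrib, Finset.sum_add_distrib]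
  have e1 : ∑ x ∈ Finset.range m, (if x = n % m then (x:ℂ) * ((m:ℕ):ℂ) else 0)
      = ((n % m : ℕ):ℂ) * ((m:ℕ):ℂ) := by
    rw [Finset.sum_eq_single (n % m)]
    · rw [if_pos rfl]
    · intro b _ hb; rw [if_neg hb]
    · intro h; exact absurd (Finset.mem_range.2 hs) h
  have e2 : ∑ x ∈ Finset.range m, (if x = 0 then (x:ℂ) * ((m:ℕ):ℂ) else 0) = 0 := by
    rw [Finset.sum_eq_single 0]
    · rw [if_pos rfl]; norm_num
    · intro b _ hb; rw [if_neg hb]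
    · intro h; exact absurd h0m h
  rw [e1, e2, ← Finset.mul_sum, hgauss]
  push_cast
  field_simp
  ring

lemma Bsum (m n : ℕ) (hm : Odd m) (hm1 : 1 ≤ m) :
    ∑ k ∈ Finset.range (2*m), 2*((-1:ℂ)^n * zeta (2*m) ^ (2*n*k) - 1) / (1 + (zeta (2*m))⁻¹ ^ (2*k))
      = 2*(m:ℂ)*((-1:ℂ)^(n + n % m) - 1) := by
  have h2m : (2*m) ≠ 0 := by omega
  have hz : IsPrimitiveRoot (zeta (2*m)) (2*m) := zeta_prim _ h2m
  have hz0 : zeta (2*m) ≠ 0 := zeta_ne_zero _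
  set z := zeta (2*m) with hzdef
  have hzk : ∀ (a : ℤ) (k : ℕ), (z^a)^k = z^(a*(k:ℤ)) := fun a k => by
    rw [← zpow_natCast (z^a), ← zpow_mul]
  have step1 : ∀ k ∈ Finset.range (2*m),
      2*((-1:ℂ)^n * z ^ (2*n*k) - 1) / (1 + z⁻¹ ^ (2*k))
      = ∑ j ∈ Finset.range m,
          ((-1:ℂ)^(n+j) * (z ^ ((2*n:ℤ) - 2*j))^k - (-1:ℂ)^j * (z ^ (-(2:ℤ)*j))^k) := by
    intro k _
    have hwm : (z⁻¹ ^ (2*k))^m = 1 := by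
      rw [← pow_mul, show 2*k*m = (2*m)*k by ring, pow_mul, inv_pow, hz.pow_eq_one, inv_one, one_pow]
    have hexp := expandB hm hwm
    have hne : (1 + z⁻¹ ^ (2*k)) ≠ 0 := by
      intro h; rw [h, zero_mul] at hexp; norm_num at hexp
    have e2 : ∀ j : ℕ, (z⁻¹ ^ (2*k))^j = (z ^ (-(2:ℤ)*j))^k := by
      intro j
      rw [← pow_mul, inv_pow, ← zpow_natCast z (2*k*j), ← zpow_neg, hzk]
      congr 1; push_cast; ring
    have e1 : ∀ j : ℕ, (z ^ ((2*n:ℤ) - 2*j))^k = z ^ (2*n*k) * (z ^ (-(2:ℤ)*j))^k := by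
      intro j
      rw [hzk, hzk, ← zpow_natCast z (2*n*k), ← zpow_add₀ hz0]
      congr 1; push_cast; ring
    have hS : ∑ j ∈ Finset.range m,
          ((-1:ℂ)^(n+j) * (z ^ ((2*n:ℤ) - 2*j))^k - (-1:ℂ)^j * (z ^ (-(2:ℤ)*j))^k)
        = ((-1:ℂ)^n * z ^ (2*n*k) - 1) * ∑ j ∈ Finset.range m, (-(z⁻¹ ^ (2*k)))^j := by
      rw [Finset.mul_sum]
      refine Finset.sum_congr rfl (fun j _ => ?_)
      rw [show (-(z⁻¹ ^ (2*k))) = (-1) * z⁻¹ ^ (2*k) by ring, mul_pow, e2 j, e1 j, pow_add]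
      ring
    rw [div_eq_iff hne, hS]
    linear_combination (-((-1:ℂ)^n * z ^ (2*n*k) - 1)) * hexp
  rw [Finset.sum_congr rfl step1, Finset.sum_comm]
  have step2 : ∀ j ∈ Finset.range m,
      ∑ k ∈ Finset.range (2*m),
          ((-1:ℂ)^(n+j) * (z ^ ((2*n:ℤ) - 2*j))^k - (-1:ℂ)^j * (z ^ (-(2:ℤ)*j))^k)
      = (-1:ℂ)^(n+j) * (if j = n % m then ((2*m:ℕ):ℂ) else 0)
        - (-1:ℂ)^j * (if j = 0 then ((2*m:ℕ):ℂ) else 0) := by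
    intro j hj
    rw [Finset.mem_range] at hj
    rw [Finset.sum_sub_distrib, ← Finset.mul_sum, ← Finset.mul_sum]
    have f1 : ∑ k ∈ Finset.range (2*m), (z ^ ((2*n:ℤ) - 2*j))^k
        = if j = n % m then ((2*m:ℕ):ℂ) else 0 := by
      rw [filt' _ (dvd_refl (2*m)) (by rw [hzk]; exact (hz.zpow_eq_one_iff_dvd _).2 ⟨2*(n:ℤ) - 2*j, by push_cast; ring⟩)]
      congr 1
      rw [hz.zpow_eq_one_iff_dvd, eq_iff_iff]
      constructor
      · intro hdvd
        push_cast at hdvd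
        rw [show (2:ℤ)*(n:ℤ) - 2*(j:ℤ) = 2*((n:ℤ)-j) by ring] at hdvd
        exact (modeq_helper n hj).1 ((mul_dvd_mul_iff_left (by norm_num : (2:ℤ) ≠ 0)).1 hdvd)
      · intro hjs
        obtain ⟨c, hc⟩ := (modeq_helper n hj).2 hjs
        exact ⟨c, by push_cast; linear_combination 2*hc⟩
    have f2 : ∑ k ∈ Finset.range (2*m), (z ^ (-(2:ℤ)*j))^k
        = if j = 0 then ((2*m:ℕ):ℂ) else 0 := by
      rw [filt' _ (dvd_refl (2*m)) (by rw [hzk]; exact (hz.zpow_eq_one_iff_dvd _).2 ⟨-(2:ℤ)*j, by push_cast; ring⟩)]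
      congr 1
      rw [hz.zpow_eq_one_iff_dvd, eq_iff_iff]
      constructor
      · intro hdvd
        push_cast at hdvd
        rw [show -(2:ℤ)*(j:ℤ) = 2*((0:ℤ)-j) by ring] at hdvd
        have h3 := (mul_dvd_mul_iff_left (by norm_num : (2:ℤ) ≠ 0)).1 hdvd
        have h4 := (modeq_helper 0 hj).1 (by simpa using h3)
        rwa [Nat.zero_mod] at h4
      · intro hj0
        exact ⟨0, by rw [hj0]; push_cast; ring⟩
    rw [f1, f2]
  rw [Finset.sum_congr rfl step2, Finset.sum_sub_distrib]
  have hs : n % m < m := Nat.mod_lt _ (by omega)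
  have hmem : n % m ∈ Finset.range m := Finset.mem_range.2 hs
  have h0mem : (0:ℕ) ∈ Finset.range m := Finset.mem_range.2 (by omega)
  rw [show (∑ x ∈ Finset.range m, (-1:ℂ)^(n+x) * (if x = n % m then ((2*m:ℕ):ℂ) else 0))
      = ∑ x ∈ Finset.range m, (if x = n % m then (-1:ℂ)^(n+x) * ((2*m:ℕ):ℂ) else 0) from
    Finset.sum_congr rfl (fun x _ => by split <;> simp),
    show (∑ x ∈ Finset.range m, (-1:ℂ)^x * (if x = 0 then ((2*m:ℕ):ℂ) else 0))
      = ∑ x ∈ Finset.range m, (if x = 0 then (-1:ℂ)^x * ((2*m:ℕ):ℂ) else 0) from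
    Finset.sum_congr rfl (fun x _ => by split <;> simp),
    Finset.sum_ite_eq' _ _ (fun x => (-1:ℂ)^(n+x) * ((2*m:ℕ):ℂ)),
    Finset.sum_ite_eq' _ _ (fun x => (-1:ℂ)^x * ((2*m:ℕ):ℂ)),
    if_pos hmem, if_pos h0mem]
  push_cast
  ring


/-- Let `m ≥ 1` be odd and `n ≥ 2` with `gcd(m, n) = 1`, and set
`δ := ⌊n/m⌋`.  With
`A := ∑_{l=0}^{n-1} ∑_{k=1}^{2m-1} 2(ζ_{2m}^{2nk} - 1)/((1 - ζ_{2m}^{-k}ζ_{2n}^{-l})(1 - ζ_{2m}^{-k}ζ_{2n}^{l}))` and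
`B := ∑_{l=0}^{n-1} ∑_{k=0}^{2m-1} 2((-1)^n ζ_{2m}^{2nk} - 1)/(1 + ζ_{2m}^{-2k})`, one has
`(m + n + 1)/m + (A + B)/(4mn) = δ + 2 + ((-1)^δ - 1)/2`. -/
theorem stmt_9 (m n : ℕ) (hm : Odd m) (hm1 : 1 ≤ m) (hn : 2 ≤ n)
    (hgcd : Nat.gcd m n = 1) :
    ((m : ℂ) + n + 1) / m +
      ((∑ l ∈ Finset.range n, ∑ k ∈ Finset.Icc 1 (2 * m - 1),
          2 * (zeta (2 * m) ^ (2 * n * k) - 1) /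
            ((1 - (zeta (2 * m))⁻¹ ^ k * (zeta (2 * n))⁻¹ ^ l) *
              (1 - (zeta (2 * m))⁻¹ ^ k * zeta (2 * n) ^ l))) +
       (∑ l ∈ Finset.range n, ∑ k ∈ Finset.range (2 * m),
          2 * ((-1 : ℂ) ^ n * zeta (2 * m) ^ (2 * n * k) - 1) /
            (1 + (zeta (2 * m))⁻¹ ^ (2 * k)))) / (4 * (m : ℂ) * n)
      = ((n / m : ℕ) : ℂ) + 2 + ((-1 : ℂ) ^ (n / m) - 1) / 2 := by
  have hm0 : (m:ℂ) ≠ 0 := Nat.cast_ne_zero.2 (by omega)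
  have hn0 : (n:ℂ) ≠ 0 := Nat.cast_ne_zero.2 (by omega)
  rw [Asum m n hm hm1 (by omega) hgcd]
  rw [Finset.sum_congr rfl (fun l (_ : l ∈ Finset.range n) => Bsum m n hm hm1),
    Finset.sum_const, Finset.card_range, nsmul_eq_mul]
  have hpow : (-1:ℂ)^(n + n % m) = (-1:ℂ)^(n / m) := by
    rw [show n + n % m = m*(n/m) + 2*(n % m) by have hd := Nat.div_add_mod n m; omega,
      pow_add, pow_mul, pow_mul,
      hm.neg_one_pow]
    norm_num
  rw [hpow]
  have hcast : (n:ℂ) = (m:ℂ)*((n/m : ℕ):ℂ) + ((n % m : ℕ):ℂ) := by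
    have h := Nat.div_add_mod n m
    exact_mod_cast (congrArg (fun t : ℕ => (t:ℂ)) h).symm
  have hn0' : (m:ℂ)*((n/m : ℕ):ℂ) + ((n % m : ℕ):ℂ) ≠ 0 := hcast ▸ hn0
  rw [hcast]
  field_simp
  ring
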